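/- Let n ≥ 2. The map sending a strict partition λ = (λ_1 > λ_2 > ⋯ > λ_ℓ > 0) with λ_1 ≤ n (equivalently, a shifted Young diagram contained in the staircase (n, n−1, …, 2, 1)) to the vector Λ_n − Σ_{(i,j)∈λ} α_{n+i−j} ∈ ℚ^n is a bijection from the set of such strict partitions onto the orbit of Λ_n under the type B_n Weyl group of signed permutations; explicitly, onto the set of all 2^n vectors (ε_1/2, …, ε_n/2) with ε_i ∈ {1, −1}. -/

import Mathlib

namespace Stmt1

/-- Standard basis vector `e_k` (1-indexed) of `ℚ^n`. -/
def E (n k : ℕ) : Fin n → ℚ := fun x => if (x : ℕ) + 1 = k then 1 else 0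

/-- Type `B_n` simple roots: `α_k = e_k - e_{k+1}` for `1 ≤ k ≤ n-1` and `α_n = e_n`. -/
def alpha (n k : ℕ) : Fin n → ℚ := if k = n then E n n else E n k - E n (k + 1)

/-- Fundamental weight `Λ_n = (e_1 + ⋯ + e_n)/2`. -/
def Lam (n : ℕ) : Fin n → ℚ := fun _ => 1 / 2

/-- Strict partitions `λ_1 > λ_2 > ⋯ > λ_ℓ > 0` with `λ_1 ≤ n` (hence at most `n` parts),
i.e. shifted Young diagrams contained in the staircase `(n, n-1, …, 2, 1)`. -/
def SP (n : ℕ) : Type :=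
  {l : Fin n → ℕ // (∀ i j : Fin n, i < j → 0 < l j → l j < l i) ∧ ∀ i, l i ≤ n}

/-- `λ ↦ Λ_n - ∑_{(i,j) ∈ λ} α_{n+i-j}`: row `i` of the shifted diagram has boxes
`(i,j)`, `i ≤ j ≤ i + λ_i - 1`, with residues `n + i - j = n - k`, `0 ≤ k ≤ λ_i - 1`. -/
def toWt (n : ℕ) (l : SP n) : Fin n → ℚ :=
  Lam n - ∑ i : Fin n, ∑ k ∈ Finset.range (l.1 i), alpha n (n - k)

lemma rowsum (n m : ℕ) (hm : m ≤ n) (hm0 : 0 < m) :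
    ∑ k ∈ Finset.range m, alpha n (n - k) = E n (n - m + 1) := by
  induction m with
  | zero => omega
  | succ m ih =>
    rcases Nat.eq_zero_or_pos m with h0 | h0
    · subst h0
      have h1 : n - 1 + 1 = n := by omega
      simp [alpha, h1]
    · rw [Finset.sum_range_succ, ih (by omega) h0]
      have h1 : ¬ (n - m = n) := by omega
      have h2 : n - (m + 1) + 1 = n - m := by omega
      have h3 : n - m + 1 = n - m + 1 := rfl
      rw [alpha, if_neg h1, h2]
      abel

lemma exists_unique_idx (n : ℕ) (l : SP n) (m : ℕ) (hm : 0 < m) (i j : Fin n)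
    (hi : l.1 i = m) (hj : l.1 j = m) : i = j := by
  by_contra h
  rcases lt_or_gt_of_ne h with h | h
  · have := l.2.1 i j h (by omega); omega
  · have := l.2.1 j i h (by omega); omega

lemma toWt_apply (n : ℕ) (l : SP n) (x : Fin n) :
    toWt n l x = if ∃ i, l.1 i = n - (x : ℕ) then -(1/2) else 1/2 := by
  have hx : (x : ℕ) < n := x.2
  have key : ∀ i : Fin n, (∑ k ∈ Finset.range (l.1 i), alpha n (n - k)) x
      = if l.1 i = n - (x : ℕ) then 1 else 0 := by
    intro i
    rcases Nat.eq_zero_or_pos (l.1 i) with h0 | h0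
    · rw [h0]
      rw [if_neg (by omega)]
      simp
    · rw [rowsum n _ (l.2.2 i) h0]
      have hli := l.2.2 i
      simp only [E]
      exact if_congr (by omega) rfl rfl
  have h1 : toWt n l x
      = 1/2 - ∑ i : Fin n, (∑ k ∈ Finset.range (l.1 i), alpha n (n - k)) x := by
    simp [toWt, Lam, Finset.sum_apply]
  rw [h1, Finset.sum_congr rfl (fun i _ => key i)]
  by_cases hex : ∃ i, l.1 i = n - (x : ℕ)
  · obtain ⟨i, hi⟩ := hex
    rw [if_pos ⟨i, hi⟩]
    rw [Finset.sum_eq_single i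
      (fun b _ hb => by
        rw [if_neg]
        intro hb'
        exact hb (exists_unique_idx n l (n - (x : ℕ)) (by omega) b i hb' hi))
      (fun h => absurd (Finset.mem_univ i) h)]
    rw [if_pos hi]
    norm_num
  · rw [if_neg hex]
    rw [Finset.sum_eq_zero (fun i _ => by
      rw [if_neg (fun h => hex ⟨i, h⟩)])]
    norm_num

lemma idx_eq (n : ℕ) (l : SP n) (i : Fin n) (hi : 0 < l.1 i) :
    (Finset.univ.filter (fun j => l.1 i < l.1 j)).card = (i : ℕ) := by
  have h : Finset.univ.filter (fun j : Fin n => l.1 i < l.1 j)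
      = Finset.Iio i := by
    ext j
    simp only [Finset.mem_filter, Finset.mem_univ, true_and, Finset.mem_Iio]
    constructor
    · intro h
      rcases lt_trichotomy j i with h1 | h1 | h1
      · exact h1
      · subst h1; exact absurd h (lt_irrefl _)
      · have := l.2.1 i j h1 (by omega); omega
    · intro h
      exact l.2.1 j i h hi
  rw [h, Fin.card_Iio]

lemma count_values (n : ℕ) (l : SP n) (m : ℕ) :
    (Finset.univ.filter (fun j => m < l.1 j)).card
      = ((Finset.Icc (m + 1) n).filter (fun v => ∃ j, l.1 j = v)).card := by
  apply Finset.card_bij (fun j _ => l.1 j)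
  · intro j hj
    simp only [Finset.mem_filter, Finset.mem_univ, true_and] at hj
    simp only [Finset.mem_filter, Finset.mem_Icc]
    exact ⟨⟨by omega, l.2.2 j⟩, ⟨j, rfl⟩⟩
  · intro j₁ hj₁ j₂ hj₂ he
    simp only [Finset.mem_filter, Finset.mem_univ, true_and] at hj₁ hj₂
    exact exists_unique_idx n l (l.1 j₁) (by omega) j₁ j₂ rfl he.symm
  · intro v hv
    simp only [Finset.mem_filter, Finset.mem_Icc] at hv
    obtain ⟨⟨hv1, hv2⟩, j, hj⟩ := hv
    exact ⟨j, by simp only [Finset.mem_filter, Finset.mem_univ, true_and]; omega, hj⟩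

lemma one_dir (n : ℕ) (l l' : SP n)
    (h : ∀ m, 0 < m → ((∃ i, l.1 i = m) ↔ (∃ i, l'.1 i = m)))
    (i : Fin n) (hi : 0 < l.1 i) : l'.1 i = l.1 i := by
  obtain ⟨j, hj⟩ := (h _ hi).1 ⟨i, rfl⟩
  have e1 := idx_eq n l i hi
  have e2 := idx_eq n l' j (by omega)
  rw [hj] at e2
  have e3 := count_values n l (l.1 i)
  have e4 := count_values n l' (l.1 i)
  have efil : (Finset.Icc (l.1 i + 1) n).filter (fun v => ∃ j, l.1 j = v)
      = (Finset.Icc (l.1 i + 1) n).filter (fun v => ∃ j, l'.1 j = v) := by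
    apply Finset.filter_congr
    intro v hv
    simp only [Finset.mem_Icc] at hv
    exact h v (by omega)
  have hij : (j : ℕ) = (i : ℕ) := by rw [← e2, e4, ← efil, ← e3]; exact e1
  rw [← hj, Fin.ext hij]

lemma sp_ext (n : ℕ) (l l' : SP n)
    (h : ∀ m, 0 < m → ((∃ i, l.1 i = m) ↔ (∃ i, l'.1 i = m))) : l = l' := by
  apply Subtype.ext
  funext i
  rcases Nat.eq_zero_or_pos (l.1 i) with h0 | h0
  · rcases Nat.eq_zero_or_pos (l'.1 i) with h0' | h0'
    · rw [h0, h0']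
    · exact one_dir n l' l (fun m hm => (h m hm).symm) i h0'
  · rw [one_dir n l l' h i h0]

theorem stmt1 (n : ℕ) (hn : 2 ≤ n) :
    Set.BijOn (toWt n) Set.univ
      {v : Fin n → ℚ | ∀ x, v x = 1 / 2 ∨ v x = -(1 / 2)} := by
  classical
  refine ⟨?_, ?_, ?_⟩
  · -- MapsTo
    intro l _
    intro x
    rw [toWt_apply]
    by_cases h : ∃ i, l.1 i = n - (x : ℕ)
    · rw [if_pos h]; right; rfl
    · rw [if_neg h]; left; rfl
  · -- InjOn
    intro l _ l' _ hE
    apply sp_ext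
    intro m hm
    by_cases hmn : m ≤ n
    · have hx : n - m < n := by omega
      have hE' := congrFun hE (⟨n - m, hx⟩ : Fin n)
      rw [toWt_apply, toWt_apply] at hE'
      have hnx : n - ((⟨n - m, hx⟩ : Fin n) : ℕ) = m := by simp; omega
      rw [hnx] at hE'
      by_cases h1 : ∃ i, l.1 i = m <;> by_cases h2 : ∃ i, l'.1 i = m
      · exact iff_of_true h1 h2
      · rw [if_pos h1, if_neg h2] at hE'; norm_num at hE'
      · rw [if_neg h1, if_pos h2] at hE'; norm_num at hE'
      · exact iff_of_false h1 h2
    · constructor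
      · rintro ⟨i, rfl⟩; exact absurd (l.2.2 i) hmn
      · rintro ⟨i, rfl⟩; exact absurd (l'.2.2 i) hmn
  · -- SurjOn
    intro v hv
    have hv' : ∀ x, v x = 1 / 2 ∨ v x = -(1 / 2) := hv
    set s : Finset ℕ :=
      (Finset.univ.filter (fun x : Fin n => v x = -(1/2))).image
        (fun x : Fin n => n - (x : ℕ)) with hs
    have hscard : s.card ≤ n := by
      refine le_trans Finset.card_image_le (le_trans (Finset.card_filter_le _ _) ?_)
      simp
    have hsmem : ∀ m ∈ s, 1 ≤ m ∧ m ≤ n := by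
      intro m hm
      rw [hs] at hm
      simp only [Finset.mem_image, Finset.mem_filter, Finset.mem_univ, true_and] at hm
      obtain ⟨x, _, rfl⟩ := hm
      have := x.2
      omega
    set l : Fin n → ℕ := fun i =>
      if h : (i : ℕ) < s.card then
        s.orderEmbOfFin rfl ⟨s.card - 1 - (i : ℕ), by omega⟩ else 0 with hl
    have hmem : ∀ i : Fin n, (i : ℕ) < s.card → l i ∈ s := by
      intro i h
      rw [hl]
      simp only [dif_pos h]
      exact Finset.orderEmbOfFin_mem s rfl _
    have hzero : ∀ i : Fin n, ¬ ((i : ℕ) < s.card) → l i = 0 := by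
      intro i h
      rw [hl]; simp only [dif_neg h]
    have hle : ∀ i, l i ≤ n := by
      intro i
      by_cases h : (i : ℕ) < s.card
      · exact (hsmem _ (hmem i h)).2
      · rw [hzero i h]; omega
    have hstrict : ∀ i j : Fin n, i < j → 0 < l j → l j < l i := by
      intro i j hij hpos
      by_cases hj : (j : ℕ) < s.card
      · have hi : (i : ℕ) < s.card := by
          have : (i : ℕ) < (j : ℕ) := hij
          omega
        rw [hl]
        simp only [dif_pos hi, dif_pos hj]
        apply (s.orderEmbOfFin rfl).strictMono
        have : (i : ℕ) < (j : ℕ) := hij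
        exact Fin.mk_lt_mk.mpr (by omega)
      · rw [hzero j hj] at hpos; omega
    have hvals : ∀ m, 0 < m → ((∃ i : Fin n, l i = m) ↔ m ∈ s) := by
      intro m hm
      constructor
      · rintro ⟨i, rfl⟩
        by_cases h : (i : ℕ) < s.card
        · exact hmem i h
        · rw [hzero i h] at hm; omega
      · intro hms
        have : m ∈ Set.range (s.orderEmbOfFin rfl) := by
          rw [Finset.range_orderEmbOfFin]; exact hms
        obtain ⟨k, hk⟩ := this
        have hkc : (k : ℕ) < s.card := k.2
        refine ⟨⟨s.card - 1 - (k : ℕ), by omega⟩, ?_⟩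
        rw [hl]
        simp only
        rw [dif_pos (show s.card - 1 - (k : ℕ) < s.card by omega)]
        have : (⟨s.card - 1 - (s.card - 1 - (k : ℕ)), by omega⟩ : Fin s.card) = k := by
          apply Fin.ext; simp; omega
        rw [this, hk]
    refine ⟨⟨l, hstrict, hle⟩, Set.mem_univ _, ?_⟩
    funext x
    refine (toWt_apply n _ x).trans ?_
    have hx : (x : ℕ) < n := x.2
    by_cases hvx : v x = -(1/2)
    · have hmems : n - (x : ℕ) ∈ s := by
        rw [hs]
        simp only [Finset.mem_image, Finset.mem_filter, Finset.mem_univ, true_and]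
        exact ⟨x, hvx, rfl⟩
      rw [if_pos ((hvals (n - (x : ℕ)) (by omega)).2 hmems), hvx]
    · have hv2 : v x = 1/2 := (hv' x).resolve_right hvx
      rw [if_neg, hv2]
      rintro ⟨i, hi⟩
      have hmems : n - (x : ℕ) ∈ s := (hvals (n - (x : ℕ)) (by omega)).1 ⟨i, hi⟩
      rw [hs] at hmems
      simp only [Finset.mem_image, Finset.mem_filter, Finset.mem_univ, true_and] at hmems
      obtain ⟨y, hy1, hy2⟩ := hmems
      have hy : (y : ℕ) < n := y.2
      have : y = x := Fin.ext (by omega)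
      rw [this] at hy1
      exact hvx hy1

end Stmt1
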